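/- Let I : A ↪ B be a Dwyer map, let F : A ⥤ C be any functor, and suppose the square with top F, left I, right J : C ⥤ D, bottom G : B ⥤ D is a pushout square in Cat. Then the functor J : C ⥤ D is fully faithful: for all objects c, c' of C, the map C(c,c') → D(Jc, Jc') induced by J is a bijection. -/

import Mathlib

open CategoryTheory

/-- The minimal cosieve of `B` generated by the image of `I : A ⥤ B`:
the set of objects of `B` that are the codomain of some arrow whose domain lies
in the image of `I`. -/
def minCosieve {A B : Type*} [Category A] [Category B] (I : A ⥤ B) : Set B :=
  {w : B | ∃ a : A, Nonempty (I.obj a ⟶ w)}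

/-- The corestriction of `I : A ⥤ B` to the minimal cosieve generated by its image. -/
def inclW {A B : Type*} [Category A] [Category B] (I : A ⥤ B) :
    A ⥤ ObjectProperty.FullSubcategory (fun b => b ∈ minCosieve I) where
  obj a := ⟨I.obj a, a, ⟨𝟙 _⟩⟩
  map f := InducedCategory.homMk (I.map f)
  map_id a := by ext; exact I.map_id a
  map_comp f g := by ext; exact I.map_comp f g

/-- A functor `I : A ⥤ B` is a Dwyer map if it is a full subcategory inclusion
(fully faithful and injective on objects), it is a sieve inclusion (classified by a
functor `χ : B ⥤ 𝟚` with `χ⁻¹(0)` equal to the image of `I`, where `𝟚 = Fin 2` is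
the two-object poset category `{0 < 1}`), and the corestriction of `I` to the
minimal cosieve `W` containing the image of `I` admits a right adjoint `R` whose
unit is the identity (a right adjoint left inverse). -/
structure IsDwyerMap {A B : Type*} [Category A] [Category B] (I : A ⥤ B) : Prop where
  full : I.Full
  faithful : I.Faithful
  injOnObj : Function.Injective I.obj
  sieve : ∃ χ : B ⥤ Fin 2, ∀ b : B, χ.obj b = 0 ↔ b ∈ Set.range I.obj
  rali : ∃ (R : ObjectProperty.FullSubcategory (fun b => b ∈ minCosieve I) ⥤ A)
    (h : inclW I ⋙ R = 𝟭 A) (adj : inclW I ⊣ R), adj.unit = eqToHom h.symm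

universe u

universe v u₁ u₂ u₃

open Opposite

/-!
The pushout of `F` along a Dwyer map `I` can be written down explicitly: it is the collage of
the profunctor which sends `c : C` and an object `b` of `B` outside the image of `I` to
`C(c, F (R b))` when `b` lies in the minimal cosieve `W`, and to `∅` otherwise. The category `C`
sits fully faithfully in any collage. `R` makes `B` into the other leg of a cocone on this
collage, and the counit of `I ⊣ R` maps the collage back onto the square. So the comparison
functor `H` from `D` to the collage has a retraction, hence is faithful, and `J ⋙ H` is the
inclusion of `C`; therefore `J` is fully faithful.
-/

namespace CategoryTheory.ObjectProperty

variable {B : Type u₂} [Category B]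

@[simp]
lemma homMk_id {P : ObjectProperty B} (b : B) (h : P b) :
    ObjectProperty.homMk (𝟙 b) = 𝟙 (⟨b, h⟩ : P.FullSubcategory) :=
  rfl

lemma homMk_comp {P : ObjectProperty B}
    {X Z : P.FullSubcategory} {b : B} (hb : P b) (f : X.obj ⟶ b) (g : b ⟶ Z.obj) :
    ObjectProperty.homMk (f ≫ g) = ObjectProperty.homMk (Y := ⟨b, hb⟩) f ≫ ObjectProperty.homMk g :=
  rfl

end CategoryTheory.ObjectProperty

lemma CategoryTheory.Adjunction.counit_app_obj_eq_eqToHom {A : Type u₁} [Category A]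
    {W : Type u₂} [Category W] {L : A ⥤ W} {R : W ⥤ A} (adj : L ⊣ R) (h : L ⋙ R = 𝟭 A)
    (hunit : adj.unit = eqToHom h.symm) (a : A) :
    adj.counit.app (L.obj a) = eqToHom (congrArg L.obj (Functor.congr_obj h a)) := by
  have := adj.left_triangle_components a
  rw [hunit, eqToHom_app, eqToHom_map] at this
  simpa using (eqToHom_comp_iff _ _ _).1 this

noncomputable def CategoryTheory.IsPushout.fullyFaithfulInl {A B C D E : Type u} [SmallCategory A]
    [SmallCategory B] [SmallCategory C] [SmallCategory D] [SmallCategory E]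
    {I : A ⥤ B} {F : A ⥤ C} {J : C ⥤ D} {G : B ⥤ D}
    (sq : IsPushout (C := Cat.{u,u}) (Z := Cat.of A) (X := Cat.of C) (Y := Cat.of B)
      (P := Cat.of D) F.toCatHom I.toCatHom J.toCatHom G.toCatHom)
    {J' : C ⥤ E} {G' : B ⥤ E} (w : F ⋙ J' = I ⋙ G') (K : E ⥤ D) (hJ : J' ⋙ K = J)
    (hG : G' ⋙ K = G) (hJ' : J'.FullyFaithful) : J.FullyFaithful := by
  let H : D ⥤ E :=
    (sq.desc (W := Cat.of E) J'.toCatHom G'.toCatHom (congrArg Functor.toCatHom w)).toFunctor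
  have hJH : J ⋙ H = J' := congrArg Cat.Hom.toFunctor (sq.inl_desc _ _ _)
  have hGH : G ⋙ H = G' := congrArg Cat.Hom.toFunctor (sq.inr_desc _ _ _)
  have hHK : H ⋙ K = 𝟭 D := by
    refine congrArg Cat.Hom.toFunctor (sq.hom_ext (W := Cat.of D) (k := (H ⋙ K).toCatHom)
      (l := (𝟭 D).toCatHom) (Cat.ext ?_) (Cat.ext ?_))
    · change J ⋙ H ⋙ K = J ⋙ 𝟭 D
      rw [← Functor.assoc, hJH, hJ, Functor.comp_id]
    · change G ⋙ H ⋙ K = G ⋙ 𝟭 D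
      rw [← Functor.assoc, hGH, hG, Functor.comp_id]
  have : H.Faithful := Functor.Faithful.of_comp_eq hHK
  exact Functor.FullyFaithful.ofCompFaithful (G := H) (hJH ▸ hJ')

/-- The collage (cograph) of a profunctor `P` from `B` to `C`. -/
inductive Collage {C : Type u₁} [Category.{v} C] {B : Type u₂} [Category.{v} B]
    (P : B ⥤ Cᵒᵖ ⥤ Type v) : Type (max u₁ u₂)
  | left (c : C)
  | right (b : B)

namespace Collage

variable {C : Type u₁} [Category.{v} C] {B : Type u₂} [Category.{v} B] {P : B ⥤ Cᵒᵖ ⥤ Type v}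

def Hom : Collage P → Collage P → Type v
  | left c, left c' => c ⟶ c'
  | left c, right b => (P.obj b).obj (op c)
  | right _, left _ => PEmpty
  | right b, right b' => b ⟶ b'

def Hom.id : (X : Collage P) → Hom X X
  | left c => 𝟙 c
  | right b => 𝟙 b

def Hom.comp : {X Y Z : Collage P} → Hom X Y → Hom Y Z → Hom X Z
  | left _, left _, left _, f, f' => f ≫ f'
  | left _, left _, right b, f, x => (P.obj b).map f.op x
  | left c, right _, right _, x, g => (P.map g).app (op c) x
  | right _, right _, right _, g, g' => g ≫ g'
  | left _, right _, left _, _, e => e.elim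
  | right _, left _, _, e, _ => e.elim
  | right _, right _, left _, _, e => e.elim

instance : Category (Collage P) where
  Hom := Hom
  id := Hom.id
  comp := Hom.comp
  id_comp {X Y} f := by
    cases X <;> cases Y
    exacts [Category.id_comp (obj := C) f, (P.obj _).map_id_apply _ f, PEmpty.elim f,
      Category.id_comp (obj := B) f]
  comp_id {X Y} f := by
    cases X <;> cases Y
    exacts [Category.comp_id (obj := C) f, congrFun (congrArg (fun φ => φ.app _) (P.map_id _)) f,
      PEmpty.elim f, Category.comp_id (obj := B) f]
  assoc {W X Y Z} f g h := by
    cases W <;> cases X <;> cases Y <;> cases Z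
    all_goals first
      | exact PEmpty.elim f | exact PEmpty.elim g | exact PEmpty.elim h
      | exact Category.assoc _ _ _
      | exact Functor.map_comp_apply _ _ _ _
      | exact NatTrans.naturality_apply _ _ _
      | exact congrFun (congrArg (fun φ => φ.app _) (P.map_comp g h)) f |>.symm

def inl : C ⥤ Collage P where
  obj := left
  map f := f
  map_id _ := rfl
  map_comp _ _ := rfl

def inr : B ⥤ Collage P where
  obj := right
  map g := g
  map_id _ := rfl
  map_comp _ _ := rfl

def fullyFaithfulInl : (inl : C ⥤ Collage P).FullyFaithful where
  preimage f := f

def ofElement {c : C} {b : B} (x : (P.obj b).obj (op c)) : inl.obj c ⟶ (inr.obj b : Collage P) :=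
  x

section desc

variable {D : Type u₃} [Category.{v} D] (J : C ⥤ D) (G : B ⥤ D)
  (σ : P ⟶ G ⋙ yoneda ⋙ (Functor.whiskeringLeft _ _ _).obj J.op)

def desc : Collage P ⥤ D where
  obj
    | left c => J.obj c
    | right b => G.obj b
  map {X Y} f := match X, Y, f with
    | left _, left _, f => J.map f
    | left c, right b, x => (σ.app b).app (op c) x
    | right _, left _, e => e.elim
    | right _, right _, g => G.map g
  map_id X := by
    cases X
    exacts [J.map_id _, G.map_id _]
  map_comp {X Y Z} f g := by
    cases X <;> cases Y <;> cases Z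
    all_goals first
      | exact PEmpty.elim f | exact PEmpty.elim g
      | exact J.map_comp _ _ | exact G.map_comp _ _
      | exact NatTrans.naturality_apply (σ.app _) f.op g
      | exact congrFun (congrArg (fun φ => φ.app _) (σ.naturality g)) f

lemma inl_comp_desc : inl ⋙ desc J G σ = J :=
  rfl

end desc

end Collage

section Sieve

variable {A : Type u₁} [Category A] {B : Type u₂} [Category B] {I : A ⥤ B}

lemma mem_minCosieve_of_hom {b b' : B} (hb : b ∈ minCosieve I) (g : b ⟶ b') :
    b' ∈ minCosieve I :=
  let ⟨a, ⟨f⟩⟩ := hb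
  ⟨a, ⟨f ≫ g⟩⟩

lemma mem_minCosieve_of_mem_range {b : B} (hb : b ∈ Set.range I.obj) : b ∈ minCosieve I := by
  obtain ⟨a, rfl⟩ := hb
  exact ⟨a, ⟨𝟙 _⟩⟩

lemma mem_range_of_hom {χ : B ⥤ Fin 2} (hχ : ∀ b : B, χ.obj b = 0 ↔ b ∈ Set.range I.obj)
    {b b' : B} (g : b ⟶ b') (hb' : b' ∈ Set.range I.obj) : b ∈ Set.range I.obj :=
  (hχ b).1 (le_antisymm ((leOfHom (χ.map g)).trans ((hχ b').2 hb').le) (Fin.zero_le _))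

end Sieve

abbrev MinCosieveCat {A B : Type*} [Category A] [Category B] (I : A ⥤ B) :=
  ObjectProperty.FullSubcategory (fun b => b ∈ minCosieve I)

namespace DwyerPushout

variable {A : Type u₁} [Category A] {B : Type u₂} [Category.{v} B] {C : Type u₃} [Category.{v} C]
  (I : A ⥤ B) (F : A ⥤ C) (R : MinCosieveCat I ⥤ A)

def profunctor : B ⥤ Cᵒᵖ ⥤ Type v where
  obj b :=
    { obj c := Σ' h : b ∈ minCosieve I, unop c ⟶ F.obj (R.obj ⟨b, h⟩)
      map f := ↾fun x => ⟨x.1, f.unop ≫ x.2⟩ }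
  map g :=
    { app _ := ↾fun x =>
        ⟨mem_minCosieve_of_hom x.1 g, x.2 ≫ F.map (R.map (ObjectProperty.homMk g))⟩ }
  map_id _ := by
    ext _ x
    exacts [rfl, heq_of_eq (show x.2 ≫ F.map (R.map (𝟙 _)) = x.2 by simp)]
  map_comp f g := by
    ext _ x
    exacts [rfl, heq_of_eq (by dsimp; simp only [Category.assoc, ← F.map_comp, ← R.map_comp]; rfl)]

/-- An explicit model of the pushout of `I` along `F`. -/
abbrev Model :=
  Collage (ObjectProperty.ι (fun b : B => b ∉ Set.range I.obj) ⋙ profunctor I F R)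

variable {I F R}

open Classical in
noncomputable def inrObj (b : B) : Model I F R :=
  if hb : b ∈ Set.range I.obj then
    Collage.inl.obj (F.obj (R.obj ⟨b, mem_minCosieve_of_mem_range hb⟩))
  else Collage.inr.obj ⟨b, hb⟩

lemma inrObj_of_mem {b : B} (hb : b ∈ Set.range I.obj) :
    inrObj b =
      (Collage.inl.obj (F.obj (R.obj ⟨b, mem_minCosieve_of_mem_range hb⟩)) : Model I F R) :=
  dif_pos hb

lemma inrObj_of_not_mem {b : B} (hb : b ∉ Set.range I.obj) :
    inrObj b = (Collage.inr.obj ⟨b, hb⟩ : Model I F R) :=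
  dif_neg hb

def toInr {c : C} {b : B} (hb : b ∉ Set.range I.obj) (h : b ∈ minCosieve I)
    (φ : c ⟶ F.obj (R.obj ⟨b, h⟩)) : Collage.inl.obj c ⟶ (Collage.inr.obj ⟨b, hb⟩ : Model I F R) :=
  Collage.ofElement (P := ObjectProperty.ι _ ⋙ profunctor I F R) ⟨h, φ⟩

lemma inl_map_comp_toInr {c c' : C} {b : B} (hb : b ∉ Set.range I.obj) (h : b ∈ minCosieve I)
    (f : c ⟶ c') (φ : c' ⟶ F.obj (R.obj ⟨b, h⟩)) :
    Collage.inl.map f ≫ toInr hb h φ = toInr hb h (f ≫ φ) :=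
  rfl

lemma toInr_comp_inr_map {c : C} {b b' : B} (hb : b ∉ Set.range I.obj) (hb' : b' ∉ Set.range I.obj)
    (h : b ∈ minCosieve I) (φ : c ⟶ F.obj (R.obj ⟨b, h⟩)) (g : b ⟶ b') :
    toInr hb h φ ≫ Collage.inr.map (ObjectProperty.homMk (Y := ⟨b', hb'⟩) g) =
      toInr hb' (mem_minCosieve_of_hom h g) (φ ≫ F.map (R.map (ObjectProperty.homMk g))) :=
  rfl

variable (hsieve : ∀ ⦃b b' : B⦄, (b ⟶ b') → b' ∈ Set.range I.obj → b ∈ Set.range I.obj)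

open Classical in
noncomputable def inrMap {b b' : B} (g : b ⟶ b') : (inrObj b : Model I F R) ⟶ inrObj b' :=
  if hb' : b' ∈ Set.range I.obj then
    eqToHom (inrObj_of_mem (hsieve g hb')) ≫
      Collage.inl.map (F.map (R.map (ObjectProperty.homMk g))) ≫ eqToHom (inrObj_of_mem hb').symm
  else if hb : b ∈ Set.range I.obj then
    eqToHom (inrObj_of_mem hb) ≫
      toInr hb' (mem_minCosieve_of_hom (mem_minCosieve_of_mem_range hb) g)
        (F.map (R.map (ObjectProperty.homMk g))) ≫
      eqToHom (inrObj_of_not_mem hb').symm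
  else
    eqToHom (inrObj_of_not_mem hb) ≫ Collage.inr.map (ObjectProperty.homMk g) ≫
      eqToHom (inrObj_of_not_mem hb').symm

lemma inrMap_of_mem {b b' : B} (g : b ⟶ b') (hb' : b' ∈ Set.range I.obj) :
    inrMap hsieve g = eqToHom (inrObj_of_mem (hsieve g hb')) ≫
      Collage.inl.map (F.map (R.map (ObjectProperty.homMk g))) ≫
      eqToHom (inrObj_of_mem hb').symm :=
  dif_pos hb'

lemma inrMap_of_mem_of_not_mem {b b' : B} (g : b ⟶ b') (hb : b ∈ Set.range I.obj)
    (hb' : b' ∉ Set.range I.obj) :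
    inrMap hsieve g = eqToHom (inrObj_of_mem hb) ≫
      toInr hb' (mem_minCosieve_of_hom (mem_minCosieve_of_mem_range hb) g)
        (F.map (R.map (ObjectProperty.homMk g))) ≫
      eqToHom (inrObj_of_not_mem hb').symm := by
  rw [inrMap, dif_neg hb', dif_pos hb]

lemma inrMap_of_not_mem {b b' : B} (g : b ⟶ b') (hb : b ∉ Set.range I.obj) :
    inrMap hsieve g = eqToHom (inrObj_of_not_mem hb) ≫
      Collage.inr.map (ObjectProperty.homMk g) ≫
      eqToHom (inrObj_of_not_mem (I := I) (F := F) (R := R) (b := b')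
        fun hb' => hb (hsieve g hb')).symm := by
  rw [inrMap, dif_neg (fun hb' => hb (hsieve g hb')), dif_neg hb]

-- Reducible, so that `simp` sees `(inr hsieve).obj b` as `inrObj b` inside `eqToHom`s.
noncomputable abbrev inr : B ⥤ Model I F R where
  obj := inrObj
  map := inrMap hsieve
  map_id b := by
    by_cases hb : b ∈ Set.range I.obj
    · simp [inrMap_of_mem hsieve _ hb]
    · simp [inrMap_of_not_mem hsieve _ hb]
  map_comp {b b' b''} g g' := by
    by_cases hb'' : b'' ∈ Set.range I.obj
    · have hb' := hsieve g' hb''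
      rw [inrMap_of_mem hsieve _ hb'', inrMap_of_mem hsieve _ hb'', inrMap_of_mem hsieve _ hb']
      simp [ObjectProperty.homMk_comp (mem_minCosieve_of_mem_range hb')]
    by_cases hb' : b' ∈ Set.range I.obj
    · rw [inrMap_of_mem hsieve _ hb', inrMap_of_mem_of_not_mem hsieve _ (hsieve g hb') hb'',
        inrMap_of_mem_of_not_mem hsieve _ hb' hb'']
      simp [ObjectProperty.homMk_comp (mem_minCosieve_of_mem_range hb'),
        reassoc_of% inl_map_comp_toInr]
    by_cases hb : b ∈ Set.range I.obj
    · rw [inrMap_of_mem_of_not_mem hsieve _ hb hb', inrMap_of_mem_of_not_mem hsieve _ hb hb'',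
        inrMap_of_not_mem hsieve _ hb']
      simp [ObjectProperty.homMk_comp (mem_minCosieve_of_hom (mem_minCosieve_of_mem_range hb) g),
        reassoc_of% toInr_comp_inr_map]
    · rw [inrMap_of_not_mem hsieve _ hb, inrMap_of_not_mem hsieve _ hb,
        inrMap_of_not_mem hsieve _ hb',
        ObjectProperty.homMk_comp (P := fun b => b ∉ Set.range I.obj) hb', Functor.map_comp]
      simp

lemma obj_mk_obj (hR : inclW I ⋙ R = 𝟭 A) (a : A) (h : I.obj a ∈ minCosieve I) :
    R.obj ⟨I.obj a, h⟩ = a :=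
  Functor.congr_obj hR a

lemma map_homMk_map (hR : inclW I ⋙ R = 𝟭 A) {a a' : A} (f : a ⟶ a') (h : I.obj a ∈ minCosieve I)
    (h' : I.obj a' ∈ minCosieve I) :
    R.map (ObjectProperty.homMk (X := ⟨_, h⟩) (Y := ⟨_, h'⟩) (I.map f)) =
      eqToHom (obj_mk_obj hR a h) ≫ f ≫ eqToHom (obj_mk_obj hR a' h').symm :=
  Functor.congr_hom hR f

lemma comp_inl_eq_comp_inr (hR : inclW I ⋙ R = 𝟭 A) :
    F ⋙ Collage.inl = I ⋙ (inr hsieve : B ⥤ Model I F R) := by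
  have hmem (a : A) : I.obj a ∈ Set.range I.obj := ⟨a, rfl⟩
  refine Functor.hext (fun a => ?_) (fun a a' f => ?_)
  · change Collage.inl.obj (F.obj a) = inrObj (I.obj a)
    rw [inrObj_of_mem (hmem a), obj_mk_obj hR]
  · simp [inrMap_of_mem hsieve _ (hmem a'), map_homMk_map hR, eqToHom_map]

section desc

variable (adj : inclW I ⊣ R)

def counitHom (b : B) (h : b ∈ minCosieve I) : I.obj (R.obj ⟨b, h⟩) ⟶ b :=
  (adj.counit.app ⟨b, h⟩).hom

lemma map_map_counitHom {b b' : B} (h : b ∈ minCosieve I) (g : b ⟶ b') :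
    I.map (R.map (ObjectProperty.homMk g)) ≫ counitHom adj b' (mem_minCosieve_of_hom h g) =
      counitHom adj b h ≫ g :=
  congrArg InducedCategory.Hom.hom
    (adj.counit.naturality (ObjectProperty.homMk g : (⟨b, h⟩ : MinCosieveCat I) ⟶ ⟨b', _⟩))

lemma counitHom_obj (hR : inclW I ⋙ R = 𝟭 A) (hunit : adj.unit = eqToHom hR.symm) (a : A)
    (h : I.obj a ∈ minCosieve I) :
    counitHom adj (I.obj a) h = eqToHom (congrArg I.obj (obj_mk_obj hR a h)) := by
  have := congrArg InducedCategory.Hom.hom (adj.counit_app_obj_eq_eqToHom hR hunit a)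
  rw [ObjectProperty.eqToHom_hom] at this
  exact this

variable {D : Type*} [Category.{v} D] {J : C ⥤ D} {G : B ⥤ D} (α : F ⋙ J ⟶ I ⋙ G)

def descNatTrans : profunctor I F R ⟶ G ⋙ yoneda ⋙ (Functor.whiskeringLeft _ _ _).obj J.op where
  app b :=
    { app _ := ↾fun x => J.map x.2 ≫ α.app _ ≫ G.map (counitHom adj b x.1)
      naturality _ _ f := by
        ext x
        exact J.map_comp_assoc _ _ _ }
  naturality b b' g := by
    ext c ⟨h, φ⟩
    change J.map (φ ≫ F.map (R.map (ObjectProperty.homMk g))) ≫ α.app _ ≫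
        G.map (counitHom adj b' _) = (J.map φ ≫ α.app _ ≫ G.map (counitHom adj b h)) ≫ G.map g
    have hα := α.naturality (R.map
      (ObjectProperty.homMk g : (⟨b, h⟩ : MinCosieveCat I) ⟶ ⟨b', mem_minCosieve_of_hom h g⟩))
    simp only [Functor.comp_map] at hα
    rw [J.map_comp, Category.assoc, reassoc_of% hα, ← G.map_comp, map_map_counitHom, G.map_comp]
    simp

def desc : Model I F R ⥤ D :=
  Collage.desc J (ObjectProperty.ι _ ⋙ G)
    (Functor.whiskerLeft (ObjectProperty.ι _) (descNatTrans adj α))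

lemma inl_comp_desc : Collage.inl ⋙ desc adj α = J :=
  Collage.inl_comp_desc _ _ _

lemma desc_map_inl_map {c c' : C} (f : c ⟶ c') : (desc adj α).map (Collage.inl.map f) = J.map f :=
  rfl

lemma desc_map_toInr {c : C} {b : B} (hb : b ∉ Set.range I.obj) (h : b ∈ minCosieve I)
    (φ : c ⟶ F.obj (R.obj ⟨b, h⟩)) :
    (desc adj α).map (toInr hb h φ) = J.map φ ≫ α.app _ ≫ G.map (counitHom adj b h) :=
  rfl

lemma desc_map_inr_map {b b' : B} (hb : b ∉ Set.range I.obj) (hb' : b' ∉ Set.range I.obj)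
    (g : b ⟶ b') :
    (desc adj α).map (Collage.inr.map (ObjectProperty.homMk (X := ⟨b, hb⟩) (Y := ⟨b', hb'⟩) g)) =
      G.map g :=
  rfl

lemma map_comp_app_comp_counitHom (hR : inclW I ⋙ R = 𝟭 A) (hunit : adj.unit = eqToHom hR.symm)
    (hsq : F ⋙ J = I ⋙ G) {a : A} {b : B} (h : I.obj a ∈ minCosieve I) (h' : b ∈ minCosieve I)
    (g : I.obj a ⟶ b) :
    J.map (F.map (R.map (ObjectProperty.homMk (X := ⟨_, h⟩) (Y := ⟨b, h'⟩) g))) ≫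
        (eqToHom hsq).app _ ≫ G.map (counitHom adj b h') =
      eqToHom (by rw [obj_mk_obj hR]; exact Functor.congr_obj hsq a) ≫ G.map g := by
  have hJ := Functor.congr_hom hsq (R.map (ObjectProperty.homMk (X := ⟨_, h⟩) (Y := ⟨b, h'⟩) g))
  simp only [Functor.comp_map] at hJ
  rw [eqToHom_app, reassoc_of% hJ]
  simp [← G.map_comp, map_map_counitHom, counitHom_obj adj hR hunit, eqToHom_map]

lemma map_map_map_homMk (hR : inclW I ⋙ R = 𝟭 A) (hunit : adj.unit = eqToHom hR.symm)
    (hsq : F ⋙ J = I ⋙ G) {a a' : A} (h : I.obj a ∈ minCosieve I) (h' : I.obj a' ∈ minCosieve I)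
    (g : I.obj a ⟶ I.obj a') :
    J.map (F.map (R.map (ObjectProperty.homMk (X := ⟨_, h⟩) (Y := ⟨_, h'⟩) g))) =
      eqToHom (by rw [obj_mk_obj hR]; exact Functor.congr_obj hsq a) ≫ G.map g ≫
        eqToHom (by rw [obj_mk_obj hR]; exact (Functor.congr_obj hsq a').symm) := by
  have := map_comp_app_comp_counitHom adj hR hunit hsq h h' g
  rw [counitHom_obj adj hR hunit, eqToHom_app, eqToHom_map, eqToHom_trans] at this
  rw [← Category.assoc, ← this]
  simp

lemma inr_comp_desc (hR : inclW I ⋙ R = 𝟭 A) (hunit : adj.unit = eqToHom hR.symm)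
    (hsq : F ⋙ J = I ⋙ G) : inr hsieve ⋙ desc adj (eqToHom hsq) = G := by
  refine Functor.hext (fun b => ?_) (fun b b' g => ?_)
  · change (desc adj (eqToHom hsq)).obj (inrObj b) = G.obj b
    by_cases hb : b ∈ Set.range I.obj
    · obtain ⟨a, rfl⟩ := hb
      rw [inrObj_of_mem ⟨a, rfl⟩]
      change J.obj (F.obj _) = _
      rw [obj_mk_obj hR]
      exact Functor.congr_obj hsq a
    · rw [inrObj_of_not_mem hb]
      rfl
  · rw [Functor.comp_map]
    by_cases hb' : b' ∈ Set.range I.obj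
    · obtain ⟨a', rfl⟩ := hb'
      obtain ⟨a, rfl⟩ := hsieve g ⟨a', rfl⟩
      simp only [inr, inrMap_of_mem hsieve _ ⟨a', rfl⟩, Functor.map_comp, eqToHom_map,
        desc_map_inl_map, map_map_map_homMk adj hR hunit hsq]
      exact (eqToHom_comp_heq_iff _ _ _).2 <| (comp_eqToHom_heq_iff _ _ _).2 <|
        (eqToHom_comp_heq_iff _ _ _).2 <| comp_eqToHom_heq _ _
    by_cases hb : b ∈ Set.range I.obj
    · obtain ⟨a, rfl⟩ := hb
      simp only [inr, inrMap_of_mem_of_not_mem hsieve _ ⟨a, rfl⟩ hb', Functor.map_comp, eqToHom_map,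
        desc_map_toInr, map_comp_app_comp_counitHom adj hR hunit hsq]
      exact (eqToHom_comp_heq_iff _ _ _).2 <| (comp_eqToHom_heq_iff _ _ _).2 <|
        (eqToHom_comp_heq_iff _ _ _).2 HEq.rfl
    · simp only [inr, inrMap_of_not_mem hsieve _ hb, Functor.map_comp, eqToHom_map,
        desc_map_inr_map]
      exact (eqToHom_comp_heq_iff _ _ _).2 <| comp_eqToHom_heq _ _

end desc

end DwyerPushout

/-- If `I : A ↪ B` is a Dwyer map and the square with top `F`, left `I`, right `J`,
bottom `G` is a pushout in `Cat`, then `J : C ⥤ D` is fully faithful: for all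
objects `c, c'` of `C`, the induced map `C(c,c') → D(Jc,Jc')` is a bijection. -/
theorem pushout_inl_fullyFaithful
    {A B C D : Type u} [SmallCategory A] [SmallCategory B] [SmallCategory C] [SmallCategory D]
    (I : A ⥤ B) (F : A ⥤ C) (J : C ⥤ D) (G : B ⥤ D)
    (hI : IsDwyerMap I)
    (sq : IsPushout (C := Cat.{u,u}) (Z := Cat.of A) (X := Cat.of C) (Y := Cat.of B)
      (P := Cat.of D) F.toCatHom I.toCatHom J.toCatHom G.toCatHom) :
    ∀ c c' : C, Function.Bijective (fun f : c ⟶ c' => J.map f) := by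
  obtain ⟨R, hR, adj, hunit⟩ := hI.rali
  obtain ⟨χ, hχ⟩ := hI.sieve
  have hsieve : ∀ ⦃b b' : B⦄, (b ⟶ b') → b' ∈ Set.range I.obj → b ∈ Set.range I.obj :=
    fun _ _ g => mem_range_of_hom hχ g
  have hsq : F ⋙ J = I ⋙ G := congrArg Cat.Hom.toFunctor sq.w
  exact (sq.fullyFaithfulInl (DwyerPushout.comp_inl_eq_comp_inr hsieve hR)
    (DwyerPushout.desc adj (eqToHom hsq)) (DwyerPushout.inl_comp_desc adj _)
    (DwyerPushout.inr_comp_desc hsieve adj hR hunit hsq) Collage.fullyFaithfulInl).map_bijective
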